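/- arXiv:2107.14555 — 7 statements merged into one kernel-verified Lean document; each statement's English description precedes it below -/
import Mathlib

section
/- Let ψ : ℝ → ℝ be infinitely differentiable, even, non-negative, non-increasing on [0, 1/2), and satisfy ψ(x) ≠ 0 if and only if x ∈ (−1/2, 1/2). Define f(x) = ∫_ℝ ψ(x − t) ψ(t) dt. Then f is non-increasing on [0, 1): for all real x, y with 0 ≤ x ≤ y < 1, f(y) ≤ f(x). -/
open MeasureTheory Real Set
open scoped Convolution

/-- If `ψ` is smooth, even, non-negative, non-increasing on `[0, 1/2)`, and nonzero
exactly on `(-1/2, 1/2)`, then its self-convolution `f(x) = ∫ ψ (x - t) ψ t dt`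
is non-increasing on `[0, 1)`. -/
theorem selfConvolution_antitoneOn (ψ : ℝ → ℝ)
    (hsmooth : ContDiff ℝ (⊤ : ℕ∞) ψ)
    (heven : ∀ x, ψ (-x) = ψ x)
    (hnonneg : ∀ x, 0 ≤ ψ x)
    (hmono : ∀ x y : ℝ, 0 ≤ x → x ≤ y → y < 1 / 2 → ψ y ≤ ψ x)
    (hsupp : ∀ x, ψ x ≠ 0 ↔ x ∈ Set.Ioo (-(1 / 2) : ℝ) (1 / 2))
    (f : ℝ → ℝ) (hf : ∀ x, f x = ∫ t : ℝ, ψ (x - t) * ψ t) :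
    ∀ x y : ℝ, 0 ≤ x → x ≤ y → y < 1 → f y ≤ f x := by
  have hψc : Continuous ψ := hsmooth.continuous
  have hdiff : Differentiable ℝ ψ := hsmooth.differentiable (by simp)
  -- ψ vanishes outside (-1/2, 1/2)
  have hzero : ∀ x : ℝ, x ∉ Set.Ioo (-(1 / 2) : ℝ) (1 / 2) → ψ x = 0 := by
    intro x hx
    by_contra h
    exact hx ((hsupp x).1 h)
  -- compact support
  have hψsupp : HasCompactSupport ψ := by
    apply HasCompactSupport.intro (isCompact_Icc (a := (-(1/2) : ℝ)) (b := 1/2))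
    intro x hx
    exact hzero x (fun h => hx ⟨h.1.le, h.2.le⟩)
  have hψ'c : Continuous (deriv ψ) := hsmooth.continuous_deriv (by simp)
  have hψ'supp : HasCompactSupport (deriv ψ) := hψsupp.deriv
  -- ψ (|t|) = ψ t
  have habs : ∀ t : ℝ, ψ |t| = ψ t := by
    intro t
    rcases le_total 0 t with h | h
    · rw [abs_of_nonneg h]
    · rw [abs_of_nonpos h, heven]
  -- key monotonicity: |a| ≤ |b| → ψ b ≤ ψ a
  have keyA : ∀ a b : ℝ, |a| ≤ |b| → ψ b ≤ ψ a := by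
    intro a b hab
    rw [← habs a, ← habs b]
    rcases lt_or_ge |b| (1/2) with hb | hb
    · exact hmono _ _ (abs_nonneg a) hab hb
    · have : ψ |b| = 0 := hzero _ (fun h => absurd h.2 (not_lt.2 hb))
      rw [this]; exact hnonneg _
  -- deriv ψ is odd
  have hodd : ∀ u : ℝ, deriv ψ (-u) = -deriv ψ u := by
    intro u
    have h1 : deriv (fun x : ℝ => ψ (-x)) u = -deriv ψ (-u) := deriv_comp_neg ψ u
    have h2 : (fun x : ℝ => ψ (-x)) = ψ := funext heven
    rw [h2] at h1
    linarith
  -- deriv ψ ≤ 0 on [0, ∞)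
  have keyB : ∀ u : ℝ, 0 ≤ u → deriv ψ u ≤ 0 := by
    intro u hu
    rcases eq_or_lt_of_le hu with rfl | hu0
    · have := hodd 0; rw [neg_zero] at this; linarith
    rcases lt_or_ge u (1/2) with hu2 | hu2
    · -- slope argument on (u, 1/2)
      have hd := (hdiff u).hasDerivAt
      rw [hasDerivAt_iff_tendsto_slope] at hd
      have hd' : Filter.Tendsto (slope ψ u) (nhdsWithin u (Set.Ioi u)) (nhds (deriv ψ u)) :=
        hd.mono_left (nhdsWithin_mono _ (fun v hv => ne_of_gt hv))
      refine le_of_tendsto hd' ?_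
      filter_upwards [Ioo_mem_nhdsGT_of_mem (Set.mem_Ico.2 ⟨le_rfl, hu2⟩)] with v hv
      rw [slope_def_field]
      apply div_nonpos_of_nonpos_of_nonneg
      · exact sub_nonpos.2 (hmono u v hu0.le hv.1.le hv.2)
      · exact sub_nonneg.2 hv.1.le
    · -- ψ u = 0 is a global minimum
      have hψu : ψ u = 0 := hzero u (fun h => absurd h.2 (not_lt.2 hu2))
      have hmin : IsLocalMin ψ u :=
        Filter.Eventually.of_forall (fun v => by rw [hψu]; exact hnonneg v)
      rw [hmin.deriv_eq_zero]
  -- f equals the convolution ψ ⋆ ψ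
  set L := ContinuousLinearMap.mul ℝ ℝ with hL
  have hfeq : f = ψ ⋆[L] ψ := by
    funext z
    rw [hf z, convolution_def]
    congr 1
    funext t
    simp [hL, mul_comm]
  have hψloc : LocallyIntegrable ψ (volume : Measure ℝ) := hψc.locallyIntegrable
  have hder : ∀ x : ℝ, HasDerivAt f ((ψ ⋆[L] deriv ψ) x) x := by
    intro x
    rw [hfeq]
    exact hψsupp.hasDerivAt_convolution_right L hψloc (hsmooth.of_le (by simp)) x
  -- the derivative of f is nonpositive on [0, ∞)
  have hder_nonpos : ∀ x : ℝ, 0 ≤ x → (ψ ⋆[L] deriv ψ) x ≤ 0 := by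
    intro x hx
    set g : ℝ → ℝ := fun u => ψ (x - u) * deriv ψ u with hg
    have hgcont : Continuous g := (hψc.comp (continuous_const.sub continuous_id)).mul hψ'c
    have hgsupp : HasCompactSupport g := hψ'supp.mul_left
    have hgint : Integrable g := hgcont.integrable_of_hasCompactSupport hgsupp
    have hgnegint : Integrable (fun u => g (-u)) := by
      have : Continuous (fun u : ℝ => g (-u)) := hgcont.comp continuous_neg
      apply this.integrable_of_hasCompactSupport
      exact (hgsupp.comp_homeomorph (Homeomorph.neg ℝ) : _)
    -- rewrite the convolution
    have h1 : (ψ ⋆[L] deriv ψ) x = ∫ u, g u := by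
      rw [convolution_def]
      have : ∀ t : ℝ, L (ψ t) (deriv ψ (x - t)) = g (x - t) := by
        intro t
        simp [hL, hg, mul_comm, sub_sub_cancel]
      simp_rw [this]
      exact integral_sub_left_eq_self g volume x
    -- pointwise bound for the symmetrized integrand, first for u ≥ 0
    have hpt0 : ∀ u : ℝ, 0 ≤ u → g u + g (-u) ≤ 0 := by
      intro u hu
      have h2 : g u + g (-u) = deriv ψ u * (ψ (x - u) - ψ (x + u)) := by
        simp only [hg, hodd, sub_neg_eq_add]
        ring
      rw [h2]
      have hd : deriv ψ u ≤ 0 := keyB u hu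
      have hm : ψ (x + u) ≤ ψ (x - u) := by
        apply keyA
        calc |x - u| ≤ |x| + |u| := abs_sub x u
          _ = x + u := by rw [abs_of_nonneg hx, abs_of_nonneg hu]
          _ = |x + u| := (abs_of_nonneg (by linarith)).symm
      nlinarith [mul_nonneg (neg_nonneg.2 hd) (sub_nonneg.2 hm)]
    have hpt : ∀ u : ℝ, g u + g (-u) ≤ 0 := by
      intro u
      rcases le_total 0 u with hu | hu
      · exact hpt0 u hu
      · have := hpt0 (-u) (by linarith)
        rw [neg_neg] at this
        linarith
    -- combine
    have h3 : (∫ u, g u) + (∫ u, g (-u)) = ∫ u, (g u + g (-u)) :=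
      (integral_add hgint hgnegint).symm
    have h4 : (∫ u, g (-u)) = ∫ u, g u := integral_neg_eq_self g volume
    have h5 : (∫ u, (g u + g (-u))) ≤ 0 := integral_nonpos hpt
    rw [h1]
    linarith [h3, h4, h5]
  -- conclude via antitoneOn_of_deriv_nonpos
  have hant : AntitoneOn f (Set.Ici (0 : ℝ)) := by
    apply antitoneOn_of_deriv_nonpos (convex_Ici 0)
    · exact fun z _ => ((hder z).continuousAt).continuousWithinAt
    · intro z hz
      exact ((hder z).differentiableAt).differentiableWithinAt
    · intro z hz
      rw [interior_Ici] at hz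
      rw [(hder z).deriv]
      exact hder_nonpos z (le_of_lt hz)
  intro x y hx hxy _
  exact hant (Set.mem_Ici.2 hx) (Set.mem_Ici.2 (hx.trans hxy)) hxy
end

section
/- Let f : ℝ → ℝ be infinitely differentiable, even, and compactly supported, and define k(ρ) = −(1/(√2 · π)) · ∫_ρ^∞ f′(u) / √(cosh u − cosh ρ) du for ρ ≥ 0. Then for every u ≥ 0, √2 · ∫_u^∞ k(ρ) · sinh(ρ) / √(cosh ρ − cosh u) dρ = f(u). -/
open MeasureTheory Real Set


noncomputable def abelKern (u v ρ : ℝ) : ℝ :=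
  Real.sinh ρ / (Real.sqrt (Real.cosh ρ - Real.cosh u) * Real.sqrt (Real.cosh v - Real.cosh ρ))

lemma abelKern_nonneg {u v ρ : ℝ} (hu : 0 ≤ u) (hρ : u ≤ ρ) : 0 ≤ abelKern u v ρ := by
  have : (0:ℝ) ≤ Real.sinh ρ := by
    rw [Real.sinh_nonneg_iff]; linarith
  unfold abelKern
  positivity

lemma abelKern_hasDerivAt {u v ρ : ℝ} (hu : 0 ≤ u) (hρ : ρ ∈ Set.Ioo u v) :
    HasDerivAt (fun ρ => Real.arcsin ((2 * Real.cosh ρ - (Real.cosh u + Real.cosh v)) /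
      (Real.cosh v - Real.cosh u))) (abelKern u v ρ) ρ := by
  obtain ⟨h1, h2⟩ := hρ
  have hρ0 : 0 ≤ ρ := le_trans hu h1.le
  have hv0 : 0 ≤ v := le_trans hρ0 h2.le
  have hX : 0 < Real.cosh ρ - Real.cosh u := by
    have : Real.cosh u < Real.cosh ρ := by
      rw [Real.cosh_lt_cosh, abs_of_nonneg hu, abs_of_nonneg hρ0]; exact h1
    linarith
  have hY : 0 < Real.cosh v - Real.cosh ρ := by
    have : Real.cosh ρ < Real.cosh v := by
      rw [Real.cosh_lt_cosh, abs_of_nonneg hρ0, abs_of_nonneg hv0]; exact h2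
    linarith
  have hab : 0 < Real.cosh v - Real.cosh u := by linarith
  set a := Real.cosh u with ha
  set b := Real.cosh v with hb
  set s : ℝ := (2 * Real.cosh ρ - (a + b)) / (b - a) with hs_def
  have hs1 : -1 < s := by
    rw [hs_def, lt_div_iff₀ hab]; nlinarith
  have hs2 : s < 1 := by
    rw [hs_def, div_lt_one hab]; nlinarith
  have hd_inner : HasDerivAt (fun ρ => (2 * Real.cosh ρ - (a + b)) / (b - a))
      (2 * Real.sinh ρ / (b - a)) ρ :=
    (((Real.hasDerivAt_cosh ρ).const_mul 2).sub_const (a + b)).div_const (b - a)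
  have harc := (Real.hasDerivAt_arcsin (ne_of_gt hs1) (ne_of_lt hs2)).comp ρ hd_inner
  have hXs : Real.sqrt (Real.cosh ρ - a) ≠ 0 := by positivity
  have hYs : Real.sqrt (b - Real.cosh ρ) ≠ 0 := by positivity
  have hsq : 1 - s ^ 2
      = (2 * Real.sqrt (Real.cosh ρ - a) * Real.sqrt (b - Real.cosh ρ) / (b - a)) ^ 2 := by
    rw [hs_def, div_pow, div_pow, mul_pow, mul_pow, Real.sq_sqrt hX.le, Real.sq_sqrt hY.le]
    field_simp
    ring
  have hval : 1 / Real.sqrt (1 - s ^ 2) * (2 * Real.sinh ρ / (b - a)) = abelKern u v ρ := by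
    rw [hsq, Real.sqrt_sq (by positivity)]
    unfold abelKern
    rw [← ha, ← hb]
    field_simp
  rw [← hval]
  exact harc

lemma abelKern_integrableOn {u v : ℝ} (hu : 0 ≤ u) :
    IntegrableOn (abelKern u v) (Set.Ioc u v) := by
  rcases le_or_gt v u with h | h
  · rw [Set.Ioc_eq_empty (not_lt.2 h)]; exact integrableOn_empty
  · exact intervalIntegral.integrableOn_deriv_of_nonneg
      ((Real.continuous_arcsin.comp (by continuity)).continuousOn)
      (fun ρ hρ => abelKern_hasDerivAt hu hρ)
      (fun ρ hρ => abelKern_nonneg hu hρ.1.le)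

lemma abelKern_integral {u v : ℝ} (hu : 0 ≤ u) (huv : u < v) :
    ∫ ρ in Set.Ioo u v, abelKern u v ρ = π := by
  have hab : 0 < Real.cosh v - Real.cosh u := by
    have : Real.cosh u < Real.cosh v := by
      rw [Real.cosh_lt_cosh, abs_of_nonneg hu, abs_of_nonneg (le_trans hu huv.le)]; exact huv
    linarith
  have hint : IntervalIntegrable (abelKern u v) volume u v := by
    rw [intervalIntegrable_iff_integrableOn_Ioc_of_le huv.le]
    exact abelKern_integrableOn hu
  have hftc := intervalIntegral.integral_eq_sub_of_hasDeriv_right_of_le huv.le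
    ((Real.continuous_arcsin.comp (by continuity)).continuousOn)
    (fun ρ hρ => (abelKern_hasDerivAt hu hρ).hasDerivWithinAt) hint
  rw [← MeasureTheory.integral_Ioc_eq_integral_Ioo, ← intervalIntegral.integral_of_le huv.le,
    hftc]
  have h1 : (2 * Real.cosh v - (Real.cosh u + Real.cosh v)) / (Real.cosh v - Real.cosh u) = 1 := by
    rw [div_eq_one_iff_eq hab.ne']; ring
  have h2 : (2 * Real.cosh u - (Real.cosh u + Real.cosh v)) / (Real.cosh v - Real.cosh u) = -1 := by
    rw [div_eq_iff hab.ne']; ring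
  simp only [Function.comp_apply]
  rw [h1, h2, Real.arcsin_one, Real.arcsin_neg_one]
  ring


/-- For `f` smooth, even and compactly supported, the Abel transform of the inverse
Abel transform `k` of `f` recovers `f`: for all `u ≥ 0`,
`√2 · ∫_u^∞ k(ρ) sinh(ρ)/√(cosh ρ - cosh u) dρ = f(u)`. -/
theorem abelTransform_inverseAbelTransform (f : ℝ → ℝ)
    (hsmooth : ContDiff ℝ (⊤ : ℕ∞) f)
    (heven : ∀ x, f (-x) = f x)
    (hcompact : HasCompactSupport f)
    (k : ℝ → ℝ)
    (hk : ∀ ρ ≥ (0 : ℝ), k ρ = -(1 / (Real.sqrt 2 * Real.pi)) *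
        ∫ u in Set.Ioi ρ, deriv f u / Real.sqrt (Real.cosh u - Real.cosh ρ)) :
    ∀ u ≥ (0 : ℝ),
      Real.sqrt 2 *
        (∫ ρ in Set.Ioi u, k ρ * Real.sinh ρ / Real.sqrt (Real.cosh ρ - Real.cosh u)) =
        f u := by
  intro u hu
  have hπ : (π : ℝ) ≠ 0 := Real.pi_ne_zero
  have hs2 : Real.sqrt 2 ≠ 0 := by positivity
  have hf'cont : Continuous (deriv f) := hsmooth.continuous_deriv (by simp)
  have hf'supp : HasCompactSupport (deriv f) := hcompact.deriv
  have hf'int : Integrable (deriv f) := hf'cont.integrable_of_hasCompactSupport hf'supp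
  set F : ℝ → ℝ → ℝ := fun ρ v =>
    Set.indicator (Set.Ioi u) (fun ρ' =>
      Set.indicator (Set.Ioi ρ') (fun v' => deriv f v' * abelKern u v' ρ') v) ρ with hF
  have hslice : ∀ v ρ, F ρ v
      = Set.indicator (Set.Ioo u v) (fun ρ' => deriv f v * abelKern u v ρ') ρ := by
    intro v ρ
    simp only [hF, Set.indicator_apply, Set.mem_Ioi, Set.mem_Ioo]
    by_cases h1 : u < ρ <;> by_cases h2 : ρ < v <;> simp [h1, h2]
  have hkern_meas : Measurable (fun p : ℝ × ℝ => deriv f p.2 * abelKern u p.2 p.1) := by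
    apply Measurable.mul
    · exact hf'cont.measurable.comp measurable_snd
    · unfold abelKern
      apply Measurable.div
      · exact (Real.continuous_sinh.comp continuous_fst).measurable
      · exact ((Real.continuous_sqrt.comp ((Real.continuous_cosh.comp continuous_fst).sub
          continuous_const)).mul (Real.continuous_sqrt.comp
          ((Real.continuous_cosh.comp continuous_snd).sub
            (Real.continuous_cosh.comp continuous_fst)))).measurable
  have hS : MeasurableSet {p : ℝ × ℝ | u < p.1 ∧ p.1 < p.2} :=
    (measurableSet_lt measurable_const measurable_fst).inter
      (measurableSet_lt measurable_fst measurable_snd)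
  have hFeq : Function.uncurry F = Set.indicator {p : ℝ × ℝ | u < p.1 ∧ p.1 < p.2}
      (fun p => deriv f p.2 * abelKern u p.2 p.1) := by
    funext p
    rcases p with ⟨ρ, v⟩
    show F ρ v = _
    rw [hslice v ρ]
    simp only [Set.indicator_apply, Set.mem_Ioo, Set.mem_setOf_eq]
  have hFmeas : AEStronglyMeasurable (Function.uncurry F) (volume.prod volume) := by
    rw [hFeq]; exact (hkern_meas.indicator hS).aestronglyMeasurable
  have hslice_int : ∀ v, Integrable (fun ρ => F ρ v) volume := by
    intro v
    rw [show (fun ρ => F ρ v)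
        = Set.indicator (Set.Ioo u v) (fun ρ' => deriv f v * abelKern u v ρ')
        from funext fun ρ => hslice v ρ]
    rw [MeasureTheory.integrable_indicator_iff measurableSet_Ioo]
    exact ((abelKern_integrableOn hu).mono_set Set.Ioo_subset_Ioc_self).const_mul _
  have habs : ∀ v, (∫ ρ, ‖F ρ v‖)
      = Set.indicator (Set.Ioi u) (fun v => |deriv f v| * π) v := by
    intro v
    have h0 : (fun ρ => ‖F ρ v‖)
        = Set.indicator (Set.Ioo u v) (fun ρ => |deriv f v| * abelKern u v ρ) := by
      funext ρ
      rw [hslice v ρ]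
      by_cases h : ρ ∈ Set.Ioo u v
      · rw [Set.indicator_of_mem h, Set.indicator_of_mem h, Real.norm_eq_abs, abs_mul,
          abs_of_nonneg (abelKern_nonneg hu h.1.le)]
      · rw [Set.indicator_of_notMem h, Set.indicator_of_notMem h, norm_zero]
    rw [h0, MeasureTheory.integral_indicator measurableSet_Ioo]
    by_cases hv : u < v
    · rw [MeasureTheory.integral_const_mul, abelKern_integral hu hv,
        Set.indicator_of_mem (Set.mem_Ioi.2 hv)]
    · rw [Set.Ioo_eq_empty hv, Set.indicator_of_notMem (by simpa using hv)]
      simp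
  have hnorm_int : Integrable (fun v => ∫ ρ, ‖F ρ v‖) volume := by
    rw [show (fun v => ∫ ρ, ‖F ρ v‖)
        = Set.indicator (Set.Ioi u) (fun v => |deriv f v| * π) from funext habs]
    refine Integrable.indicator ?_ measurableSet_Ioi
    exact (hf'cont.abs.mul continuous_const).integrable_of_hasCompactSupport (hf'supp.abs.mul_right)
  have hint2 : Integrable (Function.uncurry F) (volume.prod volume) := by
    refine (MeasureTheory.integrable_prod_iff' hFmeas).2 ⟨?_, ?_⟩
    · exact Filter.Eventually.of_forall fun v => hslice_int v
    · exact hnorm_int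
  have hEq : ∀ ρ ∈ Set.Ioi u, k ρ * Real.sinh ρ / Real.sqrt (Real.cosh ρ - Real.cosh u)
      = -(1 / (Real.sqrt 2 * π)) * ∫ v in Set.Ioi ρ, deriv f v * abelKern u v ρ := by
    intro ρ hρ
    rw [Set.mem_Ioi] at hρ
    have h1 : ∫ v in Set.Ioi ρ, deriv f v * abelKern u v ρ
        = (∫ v in Set.Ioi ρ, deriv f v / Real.sqrt (Real.cosh v - Real.cosh ρ)) *
          (Real.sinh ρ / Real.sqrt (Real.cosh ρ - Real.cosh u)) := by
      rw [← MeasureTheory.integral_mul_const]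
      refine setIntegral_congr_fun measurableSet_Ioi fun v hv => ?_
      unfold abelKern
      ring
    rw [hk ρ (le_trans hu hρ.le), h1]
    ring
  rw [MeasureTheory.setIntegral_congr_fun measurableSet_Ioi hEq,
    MeasureTheory.integral_const_mul]
  have hiter : ∫ ρ in Set.Ioi u, ∫ v in Set.Ioi ρ, deriv f v * abelKern u v ρ
      = -(π * f u) := by
    have e1 : ∫ ρ in Set.Ioi u, ∫ v in Set.Ioi ρ, deriv f v * abelKern u v ρ
        = ∫ ρ, ∫ v, F ρ v := by
      rw [← MeasureTheory.integral_indicator measurableSet_Ioi]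
      refine MeasureTheory.integral_congr_ae (Filter.Eventually.of_forall fun ρ => ?_)
      by_cases hρ : ρ ∈ Set.Ioi u
      · rw [Set.indicator_of_mem hρ, ← MeasureTheory.integral_indicator measurableSet_Ioi]
        refine MeasureTheory.integral_congr_ae (Filter.Eventually.of_forall fun v => ?_)
        simp only [hF]
        rw [Set.indicator_of_mem hρ]
      · rw [Set.indicator_of_notMem hρ]
        have h0 : ∀ v, F ρ v = 0 := fun v => by
          simp only [hF]; exact Set.indicator_of_notMem hρ _
        simp only [h0, MeasureTheory.integral_zero]
    have e2 : ∫ ρ, ∫ v, F ρ v = ∫ v, ∫ ρ, F ρ v :=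
      MeasureTheory.integral_integral_swap hint2
    have e3 : ∀ v, (∫ ρ, F ρ v) = Set.indicator (Set.Ioi u) (fun v => deriv f v * π) v := by
      intro v
      rw [show (fun ρ => F ρ v)
          = Set.indicator (Set.Ioo u v) (fun ρ' => deriv f v * abelKern u v ρ')
          from funext fun ρ => hslice v ρ]
      rw [MeasureTheory.integral_indicator measurableSet_Ioo]
      by_cases hv : u < v
      · rw [MeasureTheory.integral_const_mul, abelKern_integral hu hv,
          Set.indicator_of_mem (Set.mem_Ioi.2 hv)]
      · rw [Set.Ioo_eq_empty hv, Set.indicator_of_notMem (by simpa using hv)]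
        simp
    have e4 : ∫ v in Set.Ioi u, deriv f v = 0 - f u :=
      MeasureTheory.integral_Ioi_of_hasDerivAt_of_tendsto'
        (fun x _ => (hsmooth.differentiable (by simp) x).hasDerivAt)
        hf'int.integrableOn
        (hcompact.is_zero_at_infty.mono_left _root_.atTop_le_cocompact)
    rw [e1, e2]
    calc ∫ v, ∫ ρ, F ρ v = ∫ v, Set.indicator (Set.Ioi u) (fun v => deriv f v * π) v :=
          MeasureTheory.integral_congr_ae (Filter.Eventually.of_forall e3)
      _ = ∫ v in Set.Ioi u, deriv f v * π :=
          MeasureTheory.integral_indicator measurableSet_Ioi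
      _ = (∫ v in Set.Ioi u, deriv f v) * π := MeasureTheory.integral_mul_const π _
      _ = -(π * f u) := by rw [e4]; ring
  rw [hiter]
  field_simp
end

section
/- Let l > 0 be a real number and let k : ℝ → ℝ be a continuous function that vanishes outside a compact subset of [0, ∞). Then ∫_0^2 k( arcosh(1 + l²/(2y²)) ) · y^{−2} dy = (1/(√2 · l)) · ∫_{arcosh(1 + l²/8)}^{∞} k(ρ) · sinh(ρ) / √(cosh(ρ) − 1) dρ. -/
open MeasureTheory Real Set

/-- The inverse hyperbolic cosine, `arcosh x = log (x + √(x² - 1))` for `x ≥ 1`. -/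
noncomputable def arcosh (x : ℝ) : ℝ := Real.log (x + Real.sqrt (x ^ 2 - 1))

/-!
Since `cosh ρ = 1 + 2 sinh² (ρ/2)`, the substitution `y = l / (2 sinh (ρ/2))` inverts
`ρ = arcosh (1 + l²/(2y²))`; it maps `(arcosh (1 + l²/8), ∞)` bijectively onto `(0, 2)`, and
under it both `y⁻² |dy|` and `sinh ρ / (√2 l √(cosh ρ - 1)) dρ` become `cosh (ρ/2) / l dρ`.
-/

lemma arcosh_eq_real_arcosh : _root_.arcosh = Real.arcosh := rfl

namespace Real

lemma cosh_eq_one_add_two_mul_sinh_half_sq (x : ℝ) : cosh x = 1 + 2 * sinh (x / 2) ^ 2 := by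
  obtain ⟨y, rfl⟩ : ∃ y, x = 2 * y := ⟨x / 2, by ring⟩
  rw [mul_div_cancel_left₀ y two_ne_zero, cosh_two_mul, cosh_sq']
  ring

lemma sinh_div_sqrt_cosh_sub_one {x : ℝ} (hx : 0 < x) :
    sinh x / √(cosh x - 1) = √2 * cosh (x / 2) := by
  have hs : 0 < sinh (x / 2) := sinh_pos_iff.2 (half_pos hx)
  have hsqrt : √(cosh x - 1) = √2 * sinh (x / 2) := by
    rw [cosh_eq_one_add_two_mul_sinh_half_sq, add_sub_cancel_left, sqrt_mul zero_le_two,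
      sqrt_sq hs.le]
  have hsinh : sinh x = 2 * sinh (x / 2) * cosh (x / 2) := by
    rw [← sinh_two_mul]
    ring_nf
  have : (0 : ℝ) < √2 := by positivity
  rw [hsinh, hsqrt]
  field_simp
  rw [sq_sqrt zero_le_two]

lemma arcosh_one_add_two_mul_sq {t : ℝ} (ht : 0 ≤ t) : arcosh (1 + 2 * t ^ 2) = 2 * arsinh t := by
  have : cosh (2 * arsinh t) = 1 + 2 * t ^ 2 := by
    rw [cosh_eq_one_add_two_mul_sinh_half_sq, mul_div_cancel_left₀ _ two_ne_zero, sinh_arsinh]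
  rw [← this, arcosh_cosh (mul_nonneg zero_le_two (arsinh_nonneg_iff.2 ht))]

end Real

/-- The height `y` at which the translation `z ↦ z + l` of the upper half-plane moves points a
hyperbolic distance `ρ`. -/
noncomputable def parabolicHeight (l ρ : ℝ) : ℝ := l / (2 * sinh (ρ / 2))

section parabolicHeight

variable {l ρ : ℝ}

lemma parabolicHeight_pos (hl : 0 < l) (hρ : 0 < ρ) : 0 < parabolicHeight l ρ :=
  div_pos hl (mul_pos two_pos (sinh_pos_iff.2 (half_pos hρ)))

lemma parabolicHeight_zpow_neg_two (l ρ : ℝ) :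
    parabolicHeight l ρ ^ (-2 : ℤ) = 4 * sinh (ρ / 2) ^ 2 / l ^ 2 := by
  rw [parabolicHeight, zpow_neg, zpow_ofNat, div_pow, inv_div]
  ring

lemma arcosh_one_add_sq_div_parabolicHeight (hl : l ≠ 0) (hρ : 0 ≤ ρ) :
    Real.arcosh (1 + l ^ 2 / (2 * parabolicHeight l ρ ^ 2)) = ρ := by
  have : l ^ 2 / (2 * parabolicHeight l ρ ^ 2) = 2 * sinh (ρ / 2) ^ 2 := by
    rcases eq_or_ne (sinh (ρ / 2)) 0 with hs | hs
    · simp [parabolicHeight, hs]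
    · rw [parabolicHeight]
      field_simp
  rw [this, ← cosh_eq_one_add_two_mul_sinh_half_sq, arcosh_cosh hρ]

lemma parabolicHeight_two_mul_arsinh (hl : l ≠ 0) {y : ℝ} (hy : y ≠ 0) :
    parabolicHeight l (2 * arsinh (l / (2 * y))) = y := by
  rw [parabolicHeight, mul_div_cancel_left₀ _ two_ne_zero, sinh_arsinh]
  field_simp

lemma injOn_parabolicHeight (hl : l ≠ 0) : InjOn (parabolicHeight l) (Ici 0) :=
  LeftInvOn.injOn (f₁' := fun y ↦ Real.arcosh (1 + l ^ 2 / (2 * y ^ 2)))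
    fun _ hρ ↦ arcosh_one_add_sq_div_parabolicHeight hl hρ

lemma hasDerivAt_parabolicHeight (l : ℝ) (hρ : ρ ≠ 0) :
    HasDerivAt (parabolicHeight l) (-(l * cosh (ρ / 2)) / (4 * sinh (ρ / 2) ^ 2)) ρ := by
  have hs : sinh (ρ / 2) ≠ 0 := sinh_ne_zero.2 (div_ne_zero hρ two_ne_zero)
  have hden : HasDerivAt (fun ρ ↦ 2 * sinh (ρ / 2)) (2 * (cosh (ρ / 2) * (1 / 2))) ρ :=
    ((hasDerivAt_id' ρ).div_const 2).sinh.const_mul 2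
  exact ((hasDerivAt_const ρ l).div hden (mul_ne_zero two_ne_zero hs)).congr_deriv (by ring)

lemma parabolicHeight_image_Ioi (hl : 0 < l) {a : ℝ} (ha : 0 < a) :
    parabolicHeight l '' Ioi (2 * arsinh (l / (2 * a))) = Ioo 0 a := by
  have hρ₀ : 0 < 2 * arsinh (l / (2 * a)) := mul_pos two_pos (arsinh_pos_iff.2 (by positivity))
  ext y
  constructor
  · rintro ⟨ρ, hρ, rfl⟩
    have hρ : 2 * arsinh (l / (2 * a)) < ρ := hρ
    have hs : l / (2 * a) < sinh (ρ / 2) := by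
      rw [← sinh_arsinh (l / (2 * a)), sinh_lt_sinh]
      linarith
    refine ⟨parabolicHeight_pos hl (hρ₀.trans hρ), ?_⟩
    rw [div_lt_iff₀ (by positivity)] at hs
    rw [parabolicHeight, div_lt_iff₀ (mul_pos two_pos (sinh_pos_iff.2 (by linarith)))]
    linarith
  · rintro ⟨hy, hya⟩
    refine ⟨2 * arsinh (l / (2 * y)), ?_, parabolicHeight_two_mul_arsinh hl.ne' hy.ne'⟩
    rw [mem_Ioi, mul_lt_mul_iff_right₀ two_pos, arsinh_lt_arsinh]
    gcongr

end parabolicHeight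

theorem parabolic_change_of_variables_general (l : ℝ) (hl : 0 < l)
    (k : ℝ → ℝ) :
    (∫ y in (0 : ℝ)..2, k (_root_.arcosh (1 + l ^ 2 / (2 * y ^ 2))) * y ^ (-2 : ℤ)) =
      (1 / (Real.sqrt 2 * l)) *
        ∫ ρ in Set.Ioi (_root_.arcosh (1 + l ^ 2 / 8)),
          k ρ * Real.sinh ρ / Real.sqrt (Real.cosh ρ - 1) := by
  have hρ₀ : Real.arcosh (1 + l ^ 2 / 8) = 2 * arsinh (l / (2 * 2)) := by
    rw [← arcosh_one_add_two_mul_sq (by positivity)]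
    ring_nf
  have hpos : Ioi (2 * arsinh (l / (2 * 2))) ⊆ Ioi 0 :=
    Ioi_subset_Ioi (mul_pos two_pos (arsinh_pos_iff.2 (by positivity))).le
  rw [intervalIntegral.integral_of_le zero_le_two, integral_Ioc_eq_integral_Ioo,
    ← parabolicHeight_image_Ioi hl two_pos, arcosh_eq_real_arcosh, hρ₀,
    integral_image_eq_integral_abs_deriv_smul measurableSet_Ioi
      (fun ρ hρ ↦ (hasDerivAt_parabolicHeight l (hpos hρ).ne').hasDerivWithinAt)
      ((injOn_parabolicHeight hl.ne').mono (hpos.trans Ioi_subset_Ici_self)),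
    ← integral_const_mul]
  refine setIntegral_congr_fun measurableSet_Ioi fun ρ hρ ↦ ?_
  have hρ : 0 < ρ := hpos hρ
  rw [smul_eq_mul, arcosh_one_add_sq_div_parabolicHeight hl.ne' hρ.le,
    parabolicHeight_zpow_neg_two, mul_div_assoc (k ρ), sinh_div_sqrt_cosh_sub_one hρ, abs_div,
    abs_neg, abs_of_pos (by positivity), abs_of_pos (by positivity)]
  field_simp

/-- Change of variables `ρ = arcosh(1 + l²/(2y²))` used for the parabolic terms:
for `l > 0` and `k` continuous and vanishing outside a compact subset of `[0, ∞)`,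
`∫_0^2 k(arcosh(1 + l²/(2y²))) y⁻² dy
  = (1/(√2·l)) ∫_{arcosh(1 + l²/8)}^∞ k(ρ) sinh(ρ)/√(cosh ρ - 1) dρ`. -/
theorem parabolic_change_of_variables (l : ℝ) (hl : 0 < l)
    (k : ℝ → ℝ) (hk : Continuous k)
    (hsupp : ∃ K : Set ℝ, IsCompact K ∧ K ⊆ Set.Ici (0 : ℝ) ∧ ∀ x ∉ K, k x = 0) :
    (∫ y in (0 : ℝ)..2, k (_root_.arcosh (1 + l ^ 2 / (2 * y ^ 2))) * y ^ (-2 : ℤ)) =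
      (1 / (Real.sqrt 2 * l)) *
        ∫ ρ in Set.Ioi (_root_.arcosh (1 + l ^ 2 / 8)),
          k ρ * Real.sinh ρ / Real.sqrt (Real.cosh ρ - 1) :=
  parabolic_change_of_variables_general l hl k
end

section
/- For all real numbers x₁ > 0, x₂ > 0 and every natural number N, ∑_{(d₁,d₂) ∈ ℕ², d₁ + d₂ ≤ N} (d₁ + d₂)² · x₁^{2d₁} · x₂^{2d₂} / ((2d₁+1)! · (2d₂+1)!) ≤ (x₁² + x₂²) · sinh(x₁) · sinh(x₂) / (x₁ · x₂). -/
/-!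
Write `a_x(d) = x^{2d} / (2d+1)!`, so that `∑ a_x(d) = sinh x / x`. Since
`2d(2d+1) a_x(d) = x² a_x(d-1)`, the weighted series `∑ 2d(2d+1) a_x(d)` equals `x sinh x`.
The weight `(d₁ + d₂)²` is at most `2d₁(2d₁+1) + 2d₂(2d₂+1)`, so after enlarging the triangle
`d₁ + d₂ ≤ N` to a square, the double sum splits into
`(x₁ sinh x₁)(sinh x₂ / x₂) + (sinh x₁ / x₁)(x₂ sinh x₂)`.
-/

open Finset Real

noncomputable def sinhTerm (x : ℝ) (d : ℕ) : ℝ :=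
  x ^ (2 * d) / ((2 * d + 1).factorial : ℝ)

lemma sinhTerm_nonneg (x : ℝ) (d : ℕ) : 0 ≤ sinhTerm x d := by
  unfold sinhTerm
  have := (even_two_mul d).pow_nonneg x
  positivity

lemma mul_sinhTerm_succ (x : ℝ) (d : ℕ) :
    (2 * (d + 1) * (2 * (d + 1) + 1) : ℝ) * sinhTerm x (d + 1) = x ^ 2 * sinhTerm x d := by
  have hfac : ((2 * (d + 1) + 1).factorial : ℝ)
      = (2 * (d + 1) * (2 * (d + 1) + 1) : ℝ) * (2 * d + 1).factorial := by
    rw [show 2 * (d + 1) + 1 = 2 * d + 1 + 1 + 1 by ring, Nat.factorial_succ, Nat.factorial_succ]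
    push_cast
    ring
  unfold sinhTerm
  rw [hfac, show 2 * (d + 1) = 2 * d + 2 by ring, pow_add]
  field_simp

lemma sum_range_sinhTerm_le {x : ℝ} (hx : 0 < x) (M : ℕ) :
    ∑ d ∈ range M, sinhTerm x d ≤ sinh x / x := by
  rw [le_div_iff₀ hx, sum_mul]
  have hodd (d : ℕ) : sinhTerm x d * x = x ^ (2 * d + 1) / (2 * d + 1).factorial := by
    unfold sinhTerm
    ring
  simp only [hodd]
  exact sum_le_hasSum _ (fun d _ => by positivity) (hasSum_sinh x)

lemma sum_range_mul_sinhTerm_le {x : ℝ} (hx : 0 < x) (M : ℕ) :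
    ∑ d ∈ range M, (2 * d * (2 * d + 1) : ℝ) * sinhTerm x d ≤ x * sinh x := by
  cases M with
  | zero => simpa using (mul_pos hx (sinh_pos_iff.2 hx)).le
  | succ M =>
    rw [sum_range_succ']
    push_cast
    simp only [mul_sinhTerm_succ, ← mul_sum, mul_zero, zero_mul, add_zero]
    calc x ^ 2 * ∑ d ∈ range M, sinhTerm x d ≤ x ^ 2 * (sinh x / x) := by
          gcongr
          exact sum_range_sinhTerm_le hx M
      _ = x * sinh x := by field_simp

lemma sq_add_le_weight (d₁ d₂ : ℕ) :
    ((d₁ + d₂ : ℕ) : ℝ) ^ 2 ≤ 2 * d₁ * (2 * d₁ + 1) + 2 * d₂ * (2 * d₂ + 1) := by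
  push_cast
  nlinarith [sq_nonneg ((d₁ : ℝ) - d₂), d₁.cast_nonneg (α := ℝ), d₂.cast_nonneg (α := ℝ)]

lemma sum_range_sum_range_sub_le {M : Type*} [AddCommMonoid M] [PartialOrder M]
    [IsOrderedAddMonoid M] {f : ℕ → ℕ → M} (hf : ∀ i j, 0 ≤ f i j) (N : ℕ) :
    ∑ i ∈ range N, ∑ j ∈ range (N - i), f i j ≤ ∑ i ∈ range N, ∑ j ∈ range N, f i j :=
  sum_le_sum fun i _ =>
    sum_le_sum_of_subset_of_nonneg (range_subset_range.2 (Nat.sub_le N i)) fun j _ _ => hf i j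

lemma sum_sum_add_mul_mul {ι κ R : Type*} [CommSemiring R] (s : Finset ι) (t : Finset κ)
    (u a : ι → R) (v b : κ → R) :
    ∑ i ∈ s, ∑ j ∈ t, (u i + v j) * (a i * b j)
      = (∑ i ∈ s, u i * a i) * ∑ j ∈ t, b j + (∑ i ∈ s, a i) * ∑ j ∈ t, v j * b j := by
  simp only [sum_mul_sum, ← sum_add_distrib]
  exact sum_congr rfl fun i _ => sum_congr rfl fun j _ => by ring

/-- For positive reals `x₁, x₂` and any `N`,
`∑_{d₁+d₂ ≤ N} (d₁+d₂)² x₁^{2d₁} x₂^{2d₂} / ((2d₁+1)!(2d₂+1)!)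
  ≤ (x₁² + x₂²) sinh(x₁) sinh(x₂) / (x₁ x₂)`. -/
theorem taylor_tail_bound (x₁ x₂ : ℝ) (h1 : 0 < x₁) (h2 : 0 < x₂) (N : ℕ) :
    (∑ d₁ ∈ Finset.range (N + 1), ∑ d₂ ∈ Finset.range (N + 1 - d₁),
        ((d₁ + d₂ : ℕ) : ℝ) ^ 2 * x₁ ^ (2 * d₁) * x₂ ^ (2 * d₂) /
          ((Nat.factorial (2 * d₁ + 1) : ℝ) * (Nat.factorial (2 * d₂ + 1) : ℝ))) ≤
      (x₁ ^ 2 + x₂ ^ 2) * Real.sinh x₁ * Real.sinh x₂ / (x₁ * x₂) := by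
  set w : ℕ → ℝ := fun d => 2 * d * (2 * d + 1)
  set a := sinhTerm x₁
  set b := sinhTerm x₂
  have hab (i j : ℕ) : 0 ≤ a i * b j := mul_nonneg (sinhTerm_nonneg _ _) (sinhTerm_nonneg _ _)
  calc _ = ∑ d₁ ∈ range (N + 1), ∑ d₂ ∈ range (N + 1 - d₁),
          ((d₁ + d₂ : ℕ) : ℝ) ^ 2 * (a d₁ * b d₂) := by
        refine sum_congr rfl fun d₁ _ => sum_congr rfl fun d₂ _ => ?_
        simp only [a, b, sinhTerm]
        ring
    _ ≤ ∑ d₁ ∈ range (N + 1), ∑ d₂ ∈ range (N + 1), ((d₁ + d₂ : ℕ) : ℝ) ^ 2 * (a d₁ * b d₂) :=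
        sum_range_sum_range_sub_le (fun i j => mul_nonneg (sq_nonneg _) (hab i j)) _
    _ ≤ ∑ d₁ ∈ range (N + 1), ∑ d₂ ∈ range (N + 1), (w d₁ + w d₂) * (a d₁ * b d₂) :=
        sum_le_sum fun i _ => sum_le_sum fun j _ =>
          mul_le_mul_of_nonneg_right (sq_add_le_weight i j) (hab i j)
    _ = (∑ i ∈ range (N + 1), w i * a i) * ∑ j ∈ range (N + 1), b j
          + (∑ i ∈ range (N + 1), a i) * ∑ j ∈ range (N + 1), w j * b j :=
        sum_sum_add_mul_mul _ _ _ _ _ _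
    _ ≤ (x₁ * sinh x₁) * (sinh x₂ / x₂) + (sinh x₁ / x₁) * (x₂ * sinh x₂) := by
        gcongr
        · exact sum_nonneg fun j _ => sinhTerm_nonneg _ _
        · exact sum_range_mul_sinhTerm_le h1 _
        · exact sum_range_sinhTerm_le h2 _
        · exact sum_nonneg fun j _ => mul_nonneg (by positivity) (sinhTerm_nonneg _ _)
        · exact sum_range_sinhTerm_le h1 _
        · exact sum_range_mul_sinhTerm_le h2 _
    _ = _ := by field_simp
end

section
/- There exists a constant C > 0 such that for all integers g ≥ 2 and n ≥ 0 with n² ≤ g, ∑_{j=2}^{n} (n choose j) · (j − 2)! · (2g + n − j − 2)! / (2g + n − 3)! ≤ C · n² / g. -/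
open Finset
open scoped Nat

/-!
Each term is small: `(n choose j) (j-2)! ≤ n^j / 2`, and the ratio `(2g+n-j-2)! / (2g+n-3)!` is the
reciprocal of a product of `j - 1` integers, each at least `g`. So the `j`-th term is at most
`(g/2) x^j` with `x = n/g`, and `n² ≤ g` forces `x ≤ 1/2`; the geometric series then gives
`(g/2) · x² / (1 - x) ≤ g x² = n²/g`, so `C = 1` works.
-/

namespace Nat

lemma two_mul_factorial_sub_two_le_factorial {j : ℕ} (hj : 2 ≤ j) : 2 * (j - 2)! ≤ j ! := by
  obtain ⟨k, rfl⟩ := Nat.exists_eq_add_of_le' hj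
  rw [Nat.add_sub_cancel, factorial_succ, factorial_succ, ← Nat.mul_assoc]
  exact Nat.mul_le_mul_right _ (by nlinarith)

lemma two_mul_choose_mul_factorial_sub_two_le_pow (n : ℕ) {j : ℕ} (hj : 2 ≤ j) :
    2 * (n.choose j * (j - 2)!) ≤ n ^ j :=
  calc 2 * (n.choose j * (j - 2)!) = n.choose j * (2 * (j - 2)!) := by ring
    _ ≤ n.choose j * j ! := Nat.mul_le_mul_left _ (two_mul_factorial_sub_two_le_factorial hj)
    _ = n.descFactorial j := by rw [descFactorial_eq_factorial_mul_choose, Nat.mul_comm]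
    _ ≤ n ^ j := descFactorial_le_pow n j

lemma pow_mul_factorial_le_factorial_add {a m : ℕ} (ham : a ≤ m + 1) (k : ℕ) :
    a ^ k * m ! ≤ (m + k)! :=
  calc a ^ k * m ! ≤ m ! * (m + 1) ^ k := by rw [Nat.mul_comm]; gcongr
    _ ≤ (m + k)! := factorial_mul_pow_le_factorial

end Nat

lemma separating_term_le {g n j : ℕ} (hng : n ≤ g) (hj : 2 ≤ j) (hjn : j ≤ n) :
    ((n.choose j : ℝ) * ((j - 2)! : ℝ) * ((2 * g + n - j - 2)! : ℝ)) / ((2 * g + n - 3)! : ℝ) ≤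
      g / 2 * (n / g : ℝ) ^ j := by
  set m := 2 * g + n - j - 2
  have hm : m + (j - 1) = 2 * g + n - 3 := by omega
  have hg : (0 : ℝ) < g := by norm_cast; omega
  have hgj : (g : ℝ) ^ j = g * g ^ (j - 1) := by rw [← pow_succ', Nat.sub_add_cancel (by omega)]
  have hchoose : (2 : ℝ) * (n.choose j * (j - 2)!) ≤ n ^ j := by
    exact_mod_cast Nat.two_mul_choose_mul_factorial_sub_two_le_pow n hj
  have hfact : (g : ℝ) ^ (j - 1) * m ! ≤ (2 * g + n - 3)! := by
    rw [← hm]; exact_mod_cast Nat.pow_mul_factorial_le_factorial_add (by omega) _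
  rw [div_le_iff₀ (by positivity)]
  calc (n.choose j : ℝ) * (j - 2)! * m ! ≤ n ^ j / 2 * m ! := by gcongr; linarith
    _ = g / 2 * (n / g : ℝ) ^ j * (g ^ (j - 1) * m !) := by
      rw [div_pow, hgj]; field_simp
    _ ≤ g / 2 * (n / g : ℝ) ^ j * (2 * g + n - 3)! := by gcongr

/-- There is `C > 0` such that for all integers `g ≥ 2`, `n ≥ 0` with `n² ≤ g`,
`∑_{j=2}^n (n choose j) (j-2)! (2g+n-j-2)! / (2g+n-3)! ≤ C n²/g`. -/
theorem separating_sum_bound :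
    ∃ C > (0 : ℝ), ∀ g n : ℕ, 2 ≤ g → n ^ 2 ≤ g →
      (∑ j ∈ Finset.Icc 2 n,
          ((n.choose j : ℝ) * (Nat.factorial (j - 2) : ℝ) *
              (Nat.factorial (2 * g + n - j - 2) : ℝ)) /
            (Nat.factorial (2 * g + n - 3) : ℝ)) ≤
        C * (n : ℝ) ^ 2 / (g : ℝ) := by
  refine ⟨1, one_pos, fun g n _ hn => ?_⟩
  rcases lt_or_ge n 2 with hn2 | hn2
  · rw [Icc_eq_empty (by omega), sum_empty]
    positivity
  have hg : (0 : ℝ) < g := by norm_cast; nlinarith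
  have hx : (n / g : ℝ) ≤ 1 / 2 := by
    rw [div_le_iff₀ hg]
    have : (2 * n : ℝ) ≤ g := by exact_mod_cast (by nlinarith : 2 * n ≤ g)
    linarith
  calc _ ≤ ∑ j ∈ Ico 2 (n + 1), g / 2 * (n / g : ℝ) ^ j := by
        rw [Ico_add_one_right_eq_Icc]
        refine sum_le_sum fun j hj => ?_
        rw [mem_Icc] at hj
        exact separating_term_le (by nlinarith) hj.1 hj.2
    _ = g / 2 * ∑ j ∈ Ico 2 (n + 1), (n / g : ℝ) ^ j := (mul_sum ..).symm
    _ ≤ g / 2 * ((n / g : ℝ) ^ 2 / (1 - n / g)) := by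
        gcongr; exact geom_sum_Ico_le_of_lt_one (by positivity) (by linarith)
    _ ≤ g / 2 * ((n / g : ℝ) ^ 2 / (1 / 2)) := by gcongr; linarith
    _ = 1 * (n : ℝ) ^ 2 / g := by field_simp
end

section
/- There exists a constant C > 0 such that for all integers g ≥ 2 and n ≥ 0 with n² ≤ g, ∑_{j=0}^{n} (n choose j) · j! · (2g + n − j − 4)! / (2g + n − 3)! ≤ C / g. -/
open Finset
open scoped Nat

/-!
Write `a = 2g + n - j - 4`. The `j`-th term is `C(n,j) j! a! / (a + j + 1)!`; since
`C(n,j) j! ≤ n^j` and `(a + j + 1)! ≥ a! (a + 1) (a + 2)^j`, it is at most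
`(n / (a + 2))^j / (a + 1) ≤ (n / (2g - 2))^j / (2g - 3)`. As `n² ≤ g` forces `n < g`,
the ratio is at most `1/2`, so the sum is at most `2 / (2g - 3) ≤ 4 / g`.
-/

theorem Nat.choose_mul_factorial_le_pow (n j : ℕ) : n.choose j * j ! ≤ n ^ j := by
  rw [Nat.mul_comm, ← Nat.descFactorial_eq_factorial_mul_choose]
  exact Nat.descFactorial_le_pow n j

theorem Nat.factorial_mul_succ_mul_pow_le_factorial (a j : ℕ) :
    a ! * (a + 1) * (a + 2) ^ j ≤ (a + j + 1) ! := by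
  rw [Nat.mul_comm a !, ← Nat.factorial_succ, Nat.add_right_comm]
  exact Nat.factorial_mul_pow_le_factorial

theorem choose_mul_factorial_mul_factorial_div_factorial_le (n j a : ℕ) :
    ((n.choose j : ℝ) * j ! * a !) / (a + j + 1) ! ≤ (n / (a + 2 : ℝ)) ^ j / (a + 1) := by
  have hnum : ((n.choose j * j ! : ℕ) : ℝ) ≤ (n : ℝ) ^ j := by
    exact_mod_cast Nat.choose_mul_factorial_le_pow n j
  have hden : ((a ! * (a + 1) * (a + 2) ^ j : ℕ) : ℝ) ≤ (a + j + 1) ! := by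
    exact_mod_cast Nat.factorial_mul_succ_mul_pow_le_factorial a j
  push_cast at hnum hden
  rw [div_pow, div_div, div_le_div_iff₀ (by positivity) (by positivity)]
  calc (n.choose j : ℝ) * j ! * a ! * ((a + 2) ^ j * (a + 1))
      = (n.choose j * j !) * (a ! * (a + 1) * (a + 2) ^ j) := by ring
    _ ≤ n ^ j * (a + j + 1) ! := by gcongr

theorem two_mul_sub_three_pos {g : ℕ} (hg : 2 ≤ g) : (0 : ℝ) < 2 * g - 3 := by
  have : (2 : ℝ) ≤ g := by exact_mod_cast hg
  linarith

theorem genus_one_term_le {g n j : ℕ} (hg : 2 ≤ g) (hn : n < g) (hj : j ≤ n) :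
    ((n.choose j : ℝ) * j ! * (2 * g + n - j - 4) !) / (2 * g + n - 3) !
      ≤ (1 / 2 : ℝ) ^ j / (2 * g - 3) := by
  obtain ⟨a, ha⟩ : ∃ a, 2 * g + n - j - 4 = a := ⟨_, rfl⟩
  have hsum : 2 * g + n - 3 = a + j + 1 := by omega
  have ha1 : (2 * g : ℝ) ≤ a + 4 := by exact_mod_cast (by omega : 2 * g ≤ a + 4)
  have ha2 : (2 * n : ℝ) ≤ a + 2 := by exact_mod_cast (by omega : 2 * n ≤ a + 2)
  have hg3 := two_mul_sub_three_pos hg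
  rw [ha, hsum]
  have hratio : (n : ℝ) / (a + 2) ≤ 1 / 2 := by
    rw [div_le_div_iff₀ (by positivity) two_pos]
    linarith
  refine (choose_mul_factorial_mul_factorial_div_factorial_le n j a).trans ?_
  gcongr
  linarith

theorem genus_one_sum_le {g n : ℕ} (hg : 2 ≤ g) (hn : n < g) :
    (∑ j ∈ range (n + 1), ((n.choose j : ℝ) * j ! * (2 * g + n - j - 4) !) /
      (2 * g + n - 3) !) ≤ 2 / (2 * g - 3) := by
  have hg3 := two_mul_sub_three_pos hg
  calc _ ≤ ∑ j ∈ range (n + 1), (1 / 2 : ℝ) ^ j / (2 * g - 3) :=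
        sum_le_sum fun j hj => genus_one_term_le hg hn (Nat.lt_succ_iff.mp (mem_range.mp hj))
    _ = (∑ j ∈ range (n + 1), (1 / 2 : ℝ) ^ j) / (2 * g - 3) := (sum_div _ _ _).symm
    _ ≤ 2 / (2 * g - 3) := by gcongr; exact sum_geometric_two_le _

/-- There is `C > 0` such that for all integers `g ≥ 2`, `n ≥ 0` with `n² ≤ g`,
`∑_{j=0}^n (n choose j) j! (2g+n-j-4)! / (2g+n-3)! ≤ C/g`. -/
theorem genus_one_sum_bound :
    ∃ C > (0 : ℝ), ∀ g n : ℕ, 2 ≤ g → n ^ 2 ≤ g →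
      (∑ j ∈ Finset.range (n + 1),
          ((n.choose j : ℝ) * (Nat.factorial j : ℝ) *
              (Nat.factorial (2 * g + n - j - 4) : ℝ)) /
            (Nat.factorial (2 * g + n - 3) : ℝ)) ≤
        C / (g : ℝ) := by
  refine ⟨4, by norm_num, fun g n hg hn => ?_⟩
  have hng : n < g := by nlinarith
  have hgR : (2 : ℝ) ≤ g := by exact_mod_cast hg
  refine (genus_one_sum_le hg hng).trans ?_
  rw [div_le_div_iff₀ (by linarith) (by linarith)]
  linarith
end

section
/- There exist constants C > 0 and G > 0 such that for all integers g > G, all integers n ≥ 0 with n² ≤ g, and all integers i, j with 2 ≤ i ≤ g − 2 and 0 ≤ j ≤ n, one has (n choose j) · (2i + j − 2)! · (2g − 2i + n − j − 2)! / (2g + n − 3)! ≤ C · g^{−3}. -/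
/-!
With `a = 2i + j - 2`, `b = 2g - 2i + n - j - 2` and `N = 2g + n - 3 = a + b + 1`, the product
`a! b!` only grows when one factorial is shrunk to `k!` and the other enlarged, as long as
`k ≤ a, b`. By the symmetry `(i, j) ↦ (g - i, n - j)` we may take `k = m + 2` with
`m = min j (n - j)`; then `a! b! g^(m+3) ≤ (m+2)! N!`, while `(n choose m) (m+2)! ≤ 2 (3n)^m ≤ 2 g^m`
because `n² ≤ g`. Dividing by `g^m N!` gives the bound with `C = 2`.
-/

open Nat

theorem Nat.factorial_mul_factorial_le_of_le {k a b : ℕ} (hka : k ≤ a) (hkb : k ≤ b) :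
    a ! * b ! ≤ k ! * (a + b - k)! := by
  induction a, hka using Nat.le_induction with
  | base => rw [Nat.add_sub_cancel_left]
  | succ a _ ih =>
    rw [show a + 1 + b - k = a + b - k + 1 by omega, factorial_succ, factorial_succ]
    calc (a + 1) * a ! * b ! = (a + 1) * (a ! * b !) := Nat.mul_assoc _ _ _
      _ ≤ (a + b - k + 1) * (k ! * (a + b - k)!) := Nat.mul_le_mul (by omega) ih
      _ = k ! * ((a + b - k + 1) * (a + b - k)!) := by ring

theorem Nat.factorial_mul_factorial_mul_pow_le {k a b x : ℕ} (hka : k ≤ a) (hkb : k ≤ b)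
    (hx : x ≤ a + b + 1 - k) : a ! * b ! * x ^ (k + 1) ≤ k ! * (a + b + 1)! := by
  calc a ! * b ! * x ^ (k + 1)
      ≤ k ! * (a + b - k)! * (a + b - k + 1) ^ (k + 1) :=
        Nat.mul_le_mul (factorial_mul_factorial_le_of_le hka hkb) (Nat.pow_le_pow_left (by omega) _)
    _ = k ! * ((a + b - k)! * (a + b - k + 1) ^ (k + 1)) := Nat.mul_assoc _ _ _
    _ ≤ k ! * (a + b - k + (k + 1))! := Nat.mul_le_mul_left _ factorial_mul_pow_le_factorial
    _ = k ! * (a + b + 1)! := by rw [show a + b - k + (k + 1) = a + b + 1 by omega]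

theorem Nat.succ_mul_add_two_le_two_mul_three_pow (m : ℕ) : (m + 1) * (m + 2) ≤ 2 * 3 ^ m := by
  induction m with
  | zero => norm_num
  | succ m ih =>
    calc (m + 1 + 1) * (m + 1 + 2) ≤ 3 * ((m + 1) * (m + 2)) := by nlinarith
      _ ≤ 3 * (2 * 3 ^ m) := Nat.mul_le_mul_left _ ih
      _ = 2 * 3 ^ (m + 1) := by ring

theorem Nat.choose_mul_factorial_add_two_le (n m : ℕ) :
    n.choose m * (m + 2)! ≤ 2 * (3 * n) ^ m := by
  have hdesc : n.choose m * m ! ≤ n ^ m := by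
    rw [Nat.mul_comm, ← descFactorial_eq_factorial_mul_choose]
    exact descFactorial_le_pow n m
  calc n.choose m * (m + 2)! = n.choose m * m ! * ((m + 1) * (m + 2)) := by
        simp only [factorial_succ]; ring
    _ ≤ n ^ m * (2 * 3 ^ m) := Nat.mul_le_mul hdesc (succ_mul_add_two_le_two_mul_three_pow m)
    _ = 2 * (3 * n) ^ m := by ring

theorem Nat.choose_mul_factorial_mul_factorial_mul_cube_le {g n i j : ℕ} (hg : 6 ≤ g)
    (hn : n ^ 2 ≤ g) (hi : 2 ≤ i) (hig : i ≤ g - 2) (hj : j ≤ n) :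
    n.choose j * (2 * i + j - 2)! * (2 * g - 2 * i + n - j - 2)! * g ^ 3 ≤
      2 * (2 * g + n - 3)! := by
  set a := 2 * i + j - 2
  set b := 2 * g - 2 * i + n - j - 2
  set m := min j (n - j)
  have h3n : 3 * n ≤ g := by
    rcases le_or_gt n 2 with h | h <;> nlinarith
  have hN : 2 * g + n - 3 = a + b + 1 := by omega
  have hchoose : n.choose j = n.choose m := by
    rcases le_total j (n - j) with h | h
    · rw [show m = j from min_eq_left h]
    · rw [show m = n - j from min_eq_right h, choose_symm hj]
  have hfac : a ! * b ! * g ^ (m + 2 + 1) ≤ (m + 2)! * (a + b + 1)! :=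
    factorial_mul_factorial_mul_pow_le (by omega) (by omega) (by omega)
  refine Nat.le_of_mul_le_mul_left ?_ (pow_pos (by omega : 0 < g) m)
  calc g ^ m * (n.choose j * a ! * b ! * g ^ 3)
      = n.choose m * (a ! * b ! * g ^ (m + 2 + 1)) := by rw [hchoose]; ring
    _ ≤ n.choose m * ((m + 2)! * (a + b + 1)!) := Nat.mul_le_mul_left _ hfac
    _ = n.choose m * (m + 2)! * (a + b + 1)! := (Nat.mul_assoc _ _ _).symm
    _ ≤ 2 * (3 * n) ^ m * (a + b + 1)! :=
        Nat.mul_le_mul_right _ (choose_mul_factorial_add_two_le n m)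
    _ ≤ g ^ m * (2 * (2 * g + n - 3)!) := by rw [hN]; nlinarith [Nat.pow_le_pow_left h3n m]

/-- There are `C > 0` and `G > 0` such that for all integers `g > G`, `n ≥ 0` with
`n² ≤ g`, and all `i, j` with `2 ≤ i ≤ g - 2` and `0 ≤ j ≤ n`:
`(n choose j) (2i+j-2)! (2g-2i+n-j-2)! / (2g+n-3)! ≤ C g⁻³`. -/
theorem middle_term_bound :
    ∃ C > (0 : ℝ), ∃ G : ℕ, 0 < G ∧ ∀ g n i j : ℕ, G < g → n ^ 2 ≤ g →
      2 ≤ i → i ≤ g - 2 → j ≤ n →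
      ((n.choose j : ℝ) * (Nat.factorial (2 * i + j - 2) : ℝ) *
            (Nat.factorial (2 * g - 2 * i + n - j - 2) : ℝ)) /
          (Nat.factorial (2 * g + n - 3) : ℝ) ≤
        C / (g : ℝ) ^ 3 := by
  refine ⟨2, two_pos, 5, by norm_num, fun g n i j hg hn hi hig hj => ?_⟩
  rw [div_le_div_iff₀ (by positivity) (by positivity)]
  exact_mod_cast choose_mul_factorial_mul_factorial_mul_cube_le (by omega) hn hi hig hj
end
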